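/- arXiv:1710.05684 — 4 statements merged into one kernel-verified Lean document; each statement's English description precedes it below -/
import Mathlib

section
/- Let Λ be a finite tree (a finite nonempty connected acyclic simple graph), and let 𝒫 be a partition of the vertex set of Λ into nonempty blocks with the property that for all blocks B, B' ∈ 𝒫 and all vertices u, v ∈ B, u has a neighbor in B' if and only if v has a neighbor in B'. Let Γ_B be the simple graph whose vertices are the blocks of 𝒫, with distinct blocks B, B' adjacent if and only if some vertex of B is adjacent in Λ to some vertex of B'. Then Γ_B is a tree; in particular, Γ_B contains no cycle. -/
/-- The graph of blocks of the partition of the vertex set of `Λ` given by the fibers of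
`c : V → B`: the vertices are the blocks, and distinct blocks `b, b'` are adjacent if and
only if some vertex of the fiber over `b` is adjacent in `Λ` to some vertex of the fiber
over `b'`. -/
def blockGraphOf {V B : Type} (Λ : SimpleGraph V) (c : V → B) : SimpleGraph B where
  Adj b b' := b ≠ b' ∧ ∃ u v, Λ.Adj u v ∧ c u = b ∧ c v = b'
  symm := by
    constructor
    rintro b b' ⟨hne, u, v, h, hu, hv⟩
    exact ⟨hne.symm, v, u, h.symm, hv, hu⟩
  loopless := by
    constructor
    rintro b ⟨hne, -⟩
    exact hne rfl

/-!
An equitable partition behaves like a covering map: every vertex of a block has a neighbour in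
each block adjacent to its own, so every walk in the block graph lifts to a walk in `Λ` with the
same sequence of blocks, and a walk that never immediately reverses an edge lifts to one that never
does either. Winding around a cycle of the block graph gives such walks of every length, and in
the finite tree `Λ` they would be paths, whose length is bounded by the number of vertices.
Connectivity of the block graph is inherited from `Λ` through the surjection onto the blocks.
-/

theorem List.Nodup.getLast?_ne_head? {α : Type*} {l : List α} (hl : l.Nodup)
    (hlen : 2 ≤ l.length) : ∀ x ∈ l.getLast?, ∀ y ∈ l.head?, x ≠ y := by
  match l, hl with
  | a :: b :: l, hl =>
    rintro x hx y ⟨⟩ rfl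
    rw [List.getLast?_cons_cons] at hx
    exact (List.nodup_cons.mp hl).1 (List.mem_of_getLast? hx)

namespace SimpleGraph

variable {V : Type*} {G : SimpleGraph V}

theorem IsAcyclic.length_lt_of_isChain_ne [Fintype V] (hG : G.IsAcyclic) {u v : V}
    {p : G.Walk u v} (hp : p.edges.IsChain (· ≠ ·)) : p.length < Fintype.card V :=
  ((hG.isPath_iff_isChain p).mpr hp).length_lt

/-- Winding around a cycle never backtracks, since its last edge differs from its first. -/
theorem Walk.IsCycle.exists_isChain_ne_edges {v : V} {p : G.Walk v v} (hp : p.IsCycle)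
    (n : ℕ) : ∃ q : G.Walk v v, q.edges.IsChain (· ≠ ·) ∧ n ≤ q.length := by
  have hnodup : p.edges.Nodup := hp.edges_nodup
  have hlen : 3 ≤ p.edges.length := p.length_edges ▸ hp.three_le_length
  obtain ⟨e, he⟩ : ∃ e, p.edges.getLast? = some e :=
    ⟨_, List.getLast?_eq_some_getLast (List.ne_nil_of_length_pos (by omega))⟩
  suffices ∀ n, ∃ q : G.Walk v v, q.edges.IsChain (· ≠ ·) ∧ q.edges.getLast? = some e ∧
      n ≤ q.length from (this n).imp fun _ h ↦ ⟨h.1, h.2.2⟩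
  intro n
  induction n with
  | zero => exact ⟨p, hnodup.isChain, he, Nat.zero_le _⟩
  | succ n ih =>
    obtain ⟨q, hq, hqe, hqn⟩ := ih
    refine ⟨q.append p, ?_, ?_, ?_⟩
    · rw [Walk.edges_append, List.isChain_append, hqe, ← he]
      exact ⟨hq, hnodup.isChain, hnodup.getLast?_ne_head? (by omega)⟩
    · rw [Walk.edges_append, List.getLast?_append, he, Option.some_or]
    · rw [Walk.length_append, ← p.length_edges]
      omega

end SimpleGraph

namespace blockGraphOf

open SimpleGraph

variable {V B : Type} {Λ : SimpleGraph V} {c : V → B}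

theorem adj_of_adj_of_ne {u w : V} (h : Λ.Adj u w) (hne : c u ≠ c w) :
    (blockGraphOf Λ c).Adj (c u) (c w) :=
  ⟨hne, u, w, h, rfl, rfl⟩

theorem reachable_of_reachable {u v : V} (h : Λ.Reachable u v) :
    (blockGraphOf Λ c).Reachable (c u) (c v) := by
  obtain ⟨p⟩ := h
  induction p with
  | nil => rfl
  | @cons u w _ huw _ ih =>
    by_cases hcuw : c u = c w
    · exact hcuw ▸ ih
    · exact (adj_of_adj_of_ne huw hcuw).reachable.trans ih

theorem connected (hΛ : Λ.Connected) (hc : Function.Surjective c) :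
    (blockGraphOf Λ c).Connected := by
  obtain ⟨v⟩ := hΛ.nonempty
  refine (connected_iff_exists_forall_reachable _).mpr ⟨c v, fun b ↦ ?_⟩
  obtain ⟨w, rfl⟩ := hc b
  exact reachable_of_reachable (hΛ v w)

theorem exists_adj_of_adj
    (hequit : ∀ u v : V, c u = c v → ∀ b : B,
      ((∃ x, Λ.Adj u x ∧ c x = b) ↔ (∃ x, Λ.Adj v x ∧ c x = b)))
    {u : V} {b : B} (h : (blockGraphOf Λ c).Adj (c u) b) : ∃ x, Λ.Adj u x ∧ c x = b := by
  obtain ⟨-, w, x, hwx, hw, hx⟩ := h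
  exact (hequit w u hw b).mp ⟨x, hwx, hx⟩

theorem exists_walk_map_edges
    (hlift : ∀ u b, (blockGraphOf Λ c).Adj (c u) b → ∃ x, Λ.Adj u x ∧ c x = b)
    {b b' : B} (p : (blockGraphOf Λ c).Walk b b') {u : V} (hu : c u = b) :
    ∃ (v : V) (q : Λ.Walk u v), q.edges.map (Sym2.map c) = p.edges := by
  induction p generalizing u with
  | nil => exact ⟨u, .nil, rfl⟩
  | cons h p ih =>
    subst hu
    obtain ⟨x, hux, rfl⟩ := hlift _ _ h
    obtain ⟨v, q, hq⟩ := ih rfl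
    exact ⟨v, .cons hux q, by simp [hq]⟩

theorem isAcyclic [Fintype V] (hΛ : Λ.IsAcyclic)
    (hlift : ∀ u b, (blockGraphOf Λ c).Adj (c u) b → ∃ x, Λ.Adj u x ∧ c x = b) :
    (blockGraphOf Λ c).IsAcyclic := by
  intro b p hp
  obtain ⟨u, hu⟩ : ∃ u, c u = b := by
    cases p with
    | nil => exact (Walk.not_isCycle_nil hp).elim
    | cons h _ => obtain ⟨-, u, -, -, hu, -⟩ := h; exact ⟨u, hu⟩
  obtain ⟨p', hp'chain, hp'len⟩ := hp.exists_isChain_ne_edges (Fintype.card V)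
  obtain ⟨v, q, hq⟩ := exists_walk_map_edges hlift p' hu
  have hqchain : q.edges.IsChain (· ≠ ·) :=
    List.isChain_of_isChain_map _ (fun _ _ h heq ↦ h (heq ▸ rfl)) (hq ▸ hp'chain)
  have hqlen : q.length = p'.length := by
    rw [← q.length_edges, ← p'.length_edges, ← hq, List.length_map]
  have := hΛ.length_lt_of_isChain_ne hqchain
  omega

end blockGraphOf

/-- If `Λ` is a finite tree and the partition of its vertex set into the (nonempty) fibers
of the surjection `c : V → B` is equitable — for any two blocks `b, b'` and vertices `u, v`
in the block `b`, `u` has a neighbor in `b'` iff `v` has a neighbor in `b'` — then the graph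
of blocks is a tree; in particular, it contains no cycle. -/
theorem blockGraphOf_isTree {V B : Type} [Fintype V]
    (Λ : SimpleGraph V) (hΛ : Λ.IsTree)
    (c : V → B) (hsurj : Function.Surjective c)
    (hequit : ∀ u v : V, c u = c v → ∀ b : B,
      ((∃ x, Λ.Adj u x ∧ c x = b) ↔ (∃ x, Λ.Adj v x ∧ c x = b))) :
    (blockGraphOf Λ c).IsTree ∧ (blockGraphOf Λ c).IsAcyclic := by
  have hacyclic : (blockGraphOf Λ c).IsAcyclic :=
    blockGraphOf.isAcyclic hΛ.isAcyclic fun _ _ ↦ blockGraphOf.exists_adj_of_adj hequit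
  exact ⟨⟨blockGraphOf.connected hΛ.connected hsurj, hacyclic⟩, hacyclic⟩
end

section
/- Let Λ be a finite acyclic simple graph (a forest). Let k ≥ 2, and suppose T₁, …, T_k, F₁, …, F_{k−1} are pairwise disjoint nonempty sets of vertices of Λ such that: (i) for each 1 ≤ i ≤ k−1, every vertex of F_i has a neighbor in T_i and a neighbor in T_{i+1}; (ii) for each 2 ≤ i ≤ k−1, every vertex of T_i has a neighbor in F_{i−1} and a neighbor in F_i; (iii) every vertex of T₁ has at least two neighbors in F₁; and (iv) every vertex of T_k has at least two neighbors in F_{k−1}. Then a contradiction follows; i.e., no such family of sets exists in a finite forest. -/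
/-!
Let `S` be the union of all the sets `Tᵢ` and `Fⱼ`. Conditions (i)–(iv), together with
disjointness, give every vertex of `S` two distinct neighbours inside `S`. But a nonempty
finite forest, such as the subgraph induced on `S`, has a vertex of degree at most one: by
maximality every neighbour of the first vertex of a longest path lies on the path, so by
acyclicity it is the second vertex of the path.
-/

namespace SimpleGraph

variable {V : Type*} {G : SimpleGraph V}

theorem IsAcyclic.exists_forall_adj_eq [Nonempty V] [Finite G.edgeSet] (hG : G.IsAcyclic) :
    ∃ u, ∀ v w, G.Adj u v → G.Adj u w → v = w := by
  obtain ⟨u, _, p, hp, hmax⟩ := Walk.exists_isPath_forall_isPath_length_le_length G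
  have hsnd : ∀ v, G.Adj u v → v = p.snd := fun v huv ↦ by
    refine hG.eq_snd_of_adj_start hp huv (not_not.1 fun hv ↦ ?_)
    have := hmax _ _ _ (hp.cons hv (h := huv.symm))
    rw [Walk.length_cons] at this
    omega
  exact ⟨u, fun v w huv huw ↦ (hsnd v huv).trans (hsnd w huw).symm⟩

theorem IsAcyclic.not_forall_exists_two_adj [Finite V] (hG : G.IsAcyclic) {S : Set V}
    (hS : S.Nonempty)
    (h : ∀ v ∈ S, ∃ u₁ u₂, u₁ ≠ u₂ ∧ u₁ ∈ S ∧ u₂ ∈ S ∧ G.Adj v u₁ ∧ G.Adj v u₂) : False := by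
  have : Nonempty S := hS.to_subtype
  obtain ⟨⟨v, hv⟩, hle⟩ := (hG.induce S).exists_forall_adj_eq
  obtain ⟨u₁, u₂, hne, hu₁, hu₂, h₁, h₂⟩ := h v hv
  exact hne <| congrArg Subtype.val <|
    hle ⟨u₁, hu₁⟩ ⟨u₂, hu₂⟩ (by simpa using h₁) (by simpa using h₂)

end SimpleGraph

theorem no_two_cycles_bounded_by_type_I_general {V : Type} [Fintype V]
    (Λ : SimpleGraph V) (hforest : Λ.IsAcyclic)
    (k : ℕ) (T : Fin (k + 2) → Set V) (F : Fin (k + 1) → Set V)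
    (hTne : ∀ i, (T i).Nonempty)
    (hTT : ∀ i j, i ≠ j → Disjoint (T i) (T j))
    (hFF : ∀ i j, i ≠ j → Disjoint (F i) (F j))
    (hi : ∀ j : Fin (k + 1), ∀ v ∈ F j,
      (∃ u ∈ T j.castSucc, Λ.Adj v u) ∧ (∃ u ∈ T j.succ, Λ.Adj v u))
    (hii : ∀ i : Fin k, ∀ v ∈ T i.succ.castSucc,
      (∃ u ∈ F i.castSucc, Λ.Adj v u) ∧ (∃ u ∈ F i.succ, Λ.Adj v u))
    (hiii : ∀ v ∈ T 0, ∃ u₁ u₂, u₁ ≠ u₂ ∧ u₁ ∈ F 0 ∧ u₂ ∈ F 0 ∧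
      Λ.Adj v u₁ ∧ Λ.Adj v u₂)
    (hiv : ∀ v ∈ T (Fin.last (k + 1)), ∃ u₁ u₂, u₁ ≠ u₂ ∧
      u₁ ∈ F (Fin.last k) ∧ u₂ ∈ F (Fin.last k) ∧ Λ.Adj v u₁ ∧ Λ.Adj v u₂) :
    False := by
  set S := (⋃ i, T i) ∪ ⋃ j, F j
  have hTS (i) : T i ⊆ S := Set.subset_union_of_subset_left (Set.subset_iUnion T i) _
  have hFS (j) : F j ⊆ S := Set.subset_union_of_subset_right (Set.subset_iUnion F j) _
  refine hforest.not_forall_exists_two_adj ((hTne 0).mono (hTS 0)) ?_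
  rintro v (hv | hv) <;> obtain ⟨i, hv⟩ := Set.mem_iUnion.1 hv
  · obtain rfl | ⟨j, rfl⟩ := i.eq_zero_or_eq_succ
    · obtain ⟨u₁, u₂, hne, hu₁, hu₂, h₁, h₂⟩ := hiii v hv
      exact ⟨u₁, u₂, hne, hFS _ hu₁, hFS _ hu₂, h₁, h₂⟩
    obtain ⟨i, rfl⟩ | rfl := j.eq_castSucc_or_eq_last
    · rw [Fin.succ_castSucc] at hv
      obtain ⟨⟨u₁, hu₁, h₁⟩, ⟨u₂, hu₂, h₂⟩⟩ := hii i v hv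
      exact ⟨u₁, u₂, (hFF _ _ (Fin.castSucc_lt_succ (i := i)).ne).ne_of_mem hu₁ hu₂,
        hFS _ hu₁, hFS _ hu₂, h₁, h₂⟩
    · obtain ⟨u₁, u₂, hne, hu₁, hu₂, h₁, h₂⟩ := hiv v (Fin.succ_last k ▸ hv)
      exact ⟨u₁, u₂, hne, hFS _ hu₁, hFS _ hu₂, h₁, h₂⟩
  · obtain ⟨⟨u₁, hu₁, h₁⟩, ⟨u₂, hu₂, h₂⟩⟩ := hi i v hv
    exact ⟨u₁, u₂, (hTT _ _ (Fin.castSucc_lt_succ (i := i)).ne).ne_of_mem hu₁ hu₂,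
      hTS _ hu₁, hTS _ hu₂, h₁, h₂⟩

/-- In a finite forest `Λ` there is no family of pairwise disjoint nonempty vertex sets
`T 0, …, T (k+1)` and `F 0, …, F k` (playing the role of `T₁, …, T_k` and `F₁, …, F_{k-1}`
with `k ≥ 2`) such that: (i) every vertex of `F j` has a neighbor in `T j` and in `T (j+1)`;
(ii) every vertex of an interior set `T (i+1)` (for `0 ≤ i < k`) has a neighbor in `F i`
and in `F (i+1)`; (iii) every vertex of `T 0` has at least two neighbors in `F 0`; and
(iv) every vertex of the last set `T (k+1)` has at least two neighbors in the last set `F k`. -/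
theorem no_two_cycles_bounded_by_type_I {V : Type} [Fintype V]
    (Λ : SimpleGraph V) (hforest : Λ.IsAcyclic)
    (k : ℕ) (T : Fin (k + 2) → Set V) (F : Fin (k + 1) → Set V)
    (hTne : ∀ i, (T i).Nonempty) (hFne : ∀ j, (F j).Nonempty)
    (hTT : ∀ i j, i ≠ j → Disjoint (T i) (T j))
    (hFF : ∀ i j, i ≠ j → Disjoint (F i) (F j))
    (hTF : ∀ i j, Disjoint (T i) (F j))
    (hi : ∀ j : Fin (k + 1), ∀ v ∈ F j,
      (∃ u ∈ T j.castSucc, Λ.Adj v u) ∧ (∃ u ∈ T j.succ, Λ.Adj v u))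
    (hii : ∀ i : Fin k, ∀ v ∈ T i.succ.castSucc,
      (∃ u ∈ F i.castSucc, Λ.Adj v u) ∧ (∃ u ∈ F i.succ, Λ.Adj v u))
    (hiii : ∀ v ∈ T 0, ∃ u₁ u₂, u₁ ≠ u₂ ∧ u₁ ∈ F 0 ∧ u₂ ∈ F 0 ∧
      Λ.Adj v u₁ ∧ Λ.Adj v u₂)
    (hiv : ∀ v ∈ T (Fin.last (k + 1)), ∃ u₁ u₂, u₁ ≠ u₂ ∧
      u₁ ∈ F (Fin.last k) ∧ u₂ ∈ F (Fin.last k) ∧ Λ.Adj v u₁ ∧ Λ.Adj v u₂) :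
    False :=
  no_two_cycles_bounded_by_type_I_general Λ hforest k T F hTne hTT hFF hi hii hiii hiv
end

section
/- Encode a finite bipartite multigraph Λ by finite vertex sets V₁, V₂ and a multiplicity function m : V₁ → V₂ → ℕ, where m(v, w) is the number of edges joining v and w. Let T, F be finite sets, n : T × F → ℕ, and let surjections τ : V₁ → T, φ : V₂ → F be an equitable realization of n on Λ. Let t₀ ∈ V₁ and f₀ ∈ V₂ with r := m(t₀, f₀) ≥ 1, and suppose there is a partition of the disjoint union V₁ ⊔ V₂ into two sets C and C' with f₀ ∈ C and t₀ ∈ C', such that for every pair (v, w) ∈ V₁ × V₂ with m(v, w) > 0 other than (t₀, f₀), the vertices v and w lie both in C or both in C'. Define the split multigraph Λ' by: V₁' = (V₁ ∩ C') ⊔ ((V₁ ∩ C) × {1, …, r}) and V₂' = (V₂ ∩ C') ⊔ ((V₂ ∩ C) × {1, …, r}), with multiplicities m'(v, w) = m(v, w) for v, w ∈ C'; m'((v, i), (w, i)) = m(v, w) for v, w ∈ C and each 1 ≤ i ≤ r; m'(t₀, (f₀, i)) = 1 for each 1 ≤ i ≤ r; and m' = 0 in all other cases. Let τ' : V₁'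 → T and φ' : V₂' → F be obtained from τ and φ by forgetting the copy index. Then τ', φ' are an equitable realization of n on Λ'. -/
/-- `τ : V₁ → T` and `φ : V₂ → F` are an equitable realization of `n : T × F → ℕ` on the
finite bipartite multigraph encoded by the multiplicity function `m : V₁ → V₂ → ℕ`:
`τ` and `φ` are surjective; for every `v ∈ V₁` and `f ∈ F` the number of edges (counted
with multiplicity) from `v` to vertices `w` with `φ w = f` equals `n (τ v, f)`; and for
every `w ∈ V₂` and `t ∈ T` there is an edge from `w` to some `v` with `τ v = t` if and
only if `n (t, φ w) > 0`. -/
def MultiEquitablyRealizes {V₁ V₂ T F : Type} [Fintype V₂] [DecidableEq F]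
    (n : T × F → ℕ) (m : V₁ → V₂ → ℕ) (τ : V₁ → T) (φ : V₂ → F) : Prop :=
  Function.Surjective τ ∧ Function.Surjective φ ∧
  (∀ (v : V₁) (f : F), (∑ w : V₂, if φ w = f then m v w else 0) = n (τ v, f)) ∧
  (∀ (w : V₂) (t : T), (∃ v : V₁, τ v = t ∧ 0 < m v w) ↔ 0 < n (t, φ w))

section Split

variable {V₁ V₂ T F : Type} [DecidableEq V₁] [DecidableEq V₂]

/-- The `V₁`-side vertex set of the multigraph obtained by splitting along the partition
`(C, Cᶜ)`: the `V₁`-vertices in `Cᶜ = C'` are kept, and the `V₁`-vertices in `C` are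
replaced by `r` copies. -/
abbrev SplitL (C : Finset (V₁ ⊕ V₂)) (r : ℕ) : Type :=
  {v : V₁ // Sum.inl v ∉ C} ⊕ ({v : V₁ // Sum.inl v ∈ C} × Fin r)

/-- The `V₂`-side vertex set of the split multigraph. -/
abbrev SplitR (C : Finset (V₁ ⊕ V₂)) (r : ℕ) : Type :=
  {w : V₂ // Sum.inr w ∉ C} ⊕ ({w : V₂ // Sum.inr w ∈ C} × Fin r)

/-- The multiplicity function of the split multigraph `Λ'`: multiplicities within `C'` are
unchanged; multiplicities within the `i`-th copy of `C` are those of `C`; the distinguished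
vertex `t₀ ∈ C'` is joined by a single edge to each copy `(f₀, i)` of the distinguished
vertex `f₀ ∈ C`; and all other multiplicities are `0`. -/
def splitMult (m : V₁ → V₂ → ℕ) (t₀ : V₁) (f₀ : V₂) (C : Finset (V₁ ⊕ V₂)) (r : ℕ) :
    SplitL C r → SplitR C r → ℕ
  | Sum.inl v, Sum.inl w => m v.1 w.1
  | Sum.inl v, Sum.inr (w, _) => if v.1 = t₀ ∧ w.1 = f₀ then 1 else 0
  | Sum.inr (v, i), Sum.inr (w, j) => if i = j then m v.1 w.1 else 0
  | Sum.inr _, Sum.inl _ => 0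

/-- The map `τ' : V₁' → T` obtained from `τ` by forgetting the copy index. -/
def splitTau (τ : V₁ → T) (C : Finset (V₁ ⊕ V₂)) (r : ℕ) : SplitL C r → T
  | Sum.inl v => τ v.1
  | Sum.inr (v, _) => τ v.1

/-- The map `φ' : V₂' → F` obtained from `φ` by forgetting the copy index. -/
def splitPhi (φ : V₂ → F) (C : Finset (V₁ ⊕ V₂)) (r : ℕ) : SplitR C r → F
  | Sum.inl w => φ w.1
  | Sum.inr (w, _) => φ w.1

end Split

/-! Forgetting the copy index gives surjections `p : V₁' → V₁`, `q : V₂' → V₂` with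
`τ' = τ ∘ p` and `φ' = φ ∘ q`. Equitability passes along any such pair of projections as soon
as (i) the edges from `v'` to the fibre `q⁻¹ w` number `m (p v') w`, and (ii) every edge
`v — q w'` lifts to an edge `v' — w'` over `v`. For the split graph, (i) holds because nothing
changes inside `C'` or inside a copy of `C`, the `r = m t₀ f₀` edges between `t₀` and `f₀` are
dealt out one to each copy of `f₀`, and the separation hypothesis kills every other
multiplicity between `C` and `C'`; (ii) holds because an edge inside `C` lifts to the copy of
`C` containing `w'`, and the edge `t₀ — f₀` to the new edge from `t₀`. -/

open Finset

theorem MultiEquitablyRealizes.pullback {V₁ V₂ V₁' V₂' T F : Type}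
    [Fintype V₂] [Fintype V₂'] [DecidableEq V₂] [DecidableEq F]
    {n : T × F → ℕ} {m : V₁ → V₂ → ℕ} {τ : V₁ → T} {φ : V₂ → F}
    (h : MultiEquitablyRealizes n m τ φ)
    {m' : V₁' → V₂' → ℕ} {p : V₁' → V₁} {q : V₂' → V₂}
    (hp : Function.Surjective p) (hq : Function.Surjective q)
    (hfiber : ∀ v' w, ∑ w' with q w' = w, m' v' w' = m (p v') w)
    (hlift : ∀ v w', 0 < m v (q w') → ∃ v', p v' = v ∧ 0 < m' v' w') :
    MultiEquitablyRealizes n m' (τ ∘ p) (φ ∘ q) := by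
  obtain ⟨hτ, hφ, hdeg, hedge⟩ := h
  refine ⟨hτ.comp hp, hφ.comp hq, fun v' f => ?_, fun w' t => ?_⟩
  · rw [Function.comp_apply, ← hdeg, ← sum_fiberwise univ q]
    refine sum_congr rfl fun w _ => ?_
    rw [← hfiber, ite_sum_zero]
    exact sum_congr rfl fun w' hw' => by rw [Function.comp_apply, (mem_filter.1 hw').2]
  · rw [Function.comp_apply, ← hedge]
    constructor
    · rintro ⟨v', rfl, hpos⟩
      refine ⟨p v', rfl, hpos.trans_le ?_⟩
      rw [← hfiber]
      exact single_le_sum (fun _ _ => Nat.zero_le _) (by simp)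
    · rintro ⟨v, rfl, hpos⟩
      obtain ⟨v', rfl, hpos'⟩ := hlift v w' hpos
      exact ⟨v', rfl, hpos'⟩

section Split

variable {V₁ V₂ T F : Type}

def splitProjL (C : Finset (V₁ ⊕ V₂)) (r : ℕ) : SplitL C r → V₁
  | Sum.inl v => v.1
  | Sum.inr (v, _) => v.1

def splitProjR (C : Finset (V₁ ⊕ V₂)) (r : ℕ) : SplitR C r → V₂
  | Sum.inl w => w.1
  | Sum.inr (w, _) => w.1

@[simp]
theorem splitProjR_inl (C : Finset (V₁ ⊕ V₂)) (r : ℕ) (w : {w : V₂ // Sum.inr w ∉ C}) :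
    splitProjR C r (Sum.inl w) = w.1 := rfl

@[simp]
theorem splitProjR_inr (C : Finset (V₁ ⊕ V₂)) (r : ℕ) (w : {w : V₂ // Sum.inr w ∈ C})
    (i : Fin r) : splitProjR C r (Sum.inr (w, i)) = w.1 := rfl

theorem splitTau_eq_comp (τ : V₁ → T) (C : Finset (V₁ ⊕ V₂)) (r : ℕ) :
    splitTau τ C r = τ ∘ splitProjL C r := by
  funext v
  rcases v with v | ⟨v, i⟩ <;> rfl

theorem splitPhi_eq_comp (φ : V₂ → F) (C : Finset (V₁ ⊕ V₂)) (r : ℕ) :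
    splitPhi φ C r = φ ∘ splitProjR C r := by
  funext w
  rcases w with w | ⟨w, i⟩ <;> rfl

theorem splitProjL_surjective {C : Finset (V₁ ⊕ V₂)} {r : ℕ} (hr : 0 < r) :
    Function.Surjective (splitProjL C r) := by
  intro v
  by_cases h : Sum.inl v ∈ C
  · exact ⟨Sum.inr (⟨v, h⟩, ⟨0, hr⟩), rfl⟩
  · exact ⟨Sum.inl ⟨v, h⟩, rfl⟩

theorem splitProjR_surjective {C : Finset (V₁ ⊕ V₂)} {r : ℕ} (hr : 0 < r) :
    Function.Surjective (splitProjR C r) := by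
  intro w
  by_cases h : Sum.inr w ∈ C
  · exact ⟨Sum.inr (⟨w, h⟩, ⟨0, hr⟩), rfl⟩
  · exact ⟨Sum.inl ⟨w, h⟩, rfl⟩

theorem sum_fiber_splitProjR [DecidableEq V₁] [DecidableEq V₂] [Fintype V₂] {M : Type}
    [AddCommMonoid M] (C : Finset (V₁ ⊕ V₂)) (r : ℕ) (g : SplitR C r → M) (w : V₂) :
    ∑ w' with splitProjR C r w' = w, g w' =
      if h : Sum.inr w ∈ C then ∑ i, g (Sum.inr (⟨w, h⟩, i)) else g (Sum.inl ⟨w, h⟩) := by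
  split_ifs with h
  · have hfiber : ({w' | splitProjR C r w' = w} : Finset (SplitR C r)) =
        univ.image fun i => Sum.inr (⟨w, h⟩, i) := by
      ext (⟨x, hx⟩ | ⟨⟨x, hx⟩, i⟩)
      · simpa using fun hxw : x = w => hx (hxw ▸ h)
      · simp [eq_comm]
    rw [hfiber, sum_image fun i _ j _ hij => by simpa using hij]
  · have hfiber : ({w' | splitProjR C r w' = w} : Finset (SplitR C r)) =
        {Sum.inl ⟨w, h⟩} := by
      ext (⟨x, hx⟩ | ⟨⟨x, hx⟩, i⟩)
      · simp
      · simpa using fun hxw : x = w => h (hxw ▸ hx)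
    rw [hfiber, sum_singleton]

def IsCrossedOnlyAt (m : V₁ → V₂ → ℕ) (C : Finset (V₁ ⊕ V₂)) (t₀ : V₁) (f₀ : V₂) : Prop :=
  ∀ (v : V₁) (w : V₂), 0 < m v w → (v, w) ≠ (t₀, f₀) → (Sum.inl v ∈ C ↔ Sum.inr w ∈ C)

namespace IsCrossedOnlyAt

variable {m : V₁ → V₂ → ℕ} {C : Finset (V₁ ⊕ V₂)} {t₀ : V₁} {f₀ : V₂}

theorem eq_zero_of_notMem_of_mem (hsep : IsCrossedOnlyAt m C t₀ f₀) {v : V₁} {w : V₂}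
    (hv : Sum.inl v ∉ C) (hw : Sum.inr w ∈ C) (hne : ¬(v = t₀ ∧ w = f₀)) : m v w = 0 := by
  by_contra h
  exact hv ((hsep v w (Nat.pos_of_ne_zero h) (by simpa [Prod.ext_iff] using hne)).2 hw)

theorem eq_zero_of_mem_of_notMem (hsep : IsCrossedOnlyAt m C t₀ f₀) (ht₀ : Sum.inl t₀ ∉ C)
    {v : V₁} {w : V₂} (hv : Sum.inl v ∈ C) (hw : Sum.inr w ∉ C) : m v w = 0 := by
  by_contra h
  have hne : (v, w) ≠ (t₀, f₀) := fun hvw => ht₀ ((Prod.mk.inj hvw).1 ▸ hv)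
  exact hw ((hsep v w (Nat.pos_of_ne_zero h) hne).1 hv)

variable [DecidableEq V₁] [DecidableEq V₂]

theorem sum_fiber_splitMult [Fintype V₂] (hsep : IsCrossedOnlyAt m C t₀ f₀)
    (ht₀ : Sum.inl t₀ ∉ C) (v' : SplitL C (m t₀ f₀)) (w : V₂) :
    ∑ w' with splitProjR C (m t₀ f₀) w' = w, splitMult m t₀ f₀ C (m t₀ f₀) v' w' =
      m (splitProjL C (m t₀ f₀) v') w := by
  rw [sum_fiber_splitProjR]
  rcases v' with ⟨v, hv⟩ | ⟨⟨v, hv⟩, i⟩ <;> split_ifs with hw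
  · by_cases hvw : v = t₀ ∧ w = f₀
    · obtain ⟨rfl, rfl⟩ := hvw
      simp [splitMult, splitProjL]
    · simp [splitMult, splitProjL, hvw, hsep.eq_zero_of_notMem_of_mem hv hw hvw]
  · rfl
  · simp [splitMult, splitProjL]
  · exact (hsep.eq_zero_of_mem_of_notMem ht₀ hv hw).symm

theorem exists_splitMult_pos (hsep : IsCrossedOnlyAt m C t₀ f₀) (ht₀ : Sum.inl t₀ ∉ C)
    {r : ℕ} (v : V₁) (w' : SplitR C r) (h : 0 < m v (splitProjR C r w')) :
    ∃ v', splitProjL C r v' = v ∧ 0 < splitMult m t₀ f₀ C r v' w' := by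
  rcases w' with ⟨w, hw⟩ | ⟨⟨w, hw⟩, i⟩ <;> by_cases hv : Sum.inl v ∈ C
  · exact absurd (hsep.eq_zero_of_mem_of_notMem ht₀ hv hw) h.ne'
  · exact ⟨Sum.inl ⟨v, hv⟩, rfl, h⟩
  · exact ⟨Sum.inr (⟨v, hv⟩, i), rfl, by simpa [splitMult] using h⟩
  · obtain ⟨rfl, rfl⟩ : v = t₀ ∧ w = f₀ := by
      by_contra hne
      exact h.ne' (hsep.eq_zero_of_notMem_of_mem hv hw hne)
    exact ⟨Sum.inl ⟨v, hv⟩, rfl, by simp [splitMult]⟩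

end IsCrossedOnlyAt

end Split

theorem splitMult_equitablyRealizes_general {V₁ V₂ T F : Type}
    [Fintype V₂] [DecidableEq V₁] [DecidableEq V₂] [DecidableEq F]
    (n : T × F → ℕ) (m : V₁ → V₂ → ℕ) (τ : V₁ → T) (φ : V₂ → F)
    (hreal : MultiEquitablyRealizes n m τ φ)
    (t₀ : V₁) (f₀ : V₂) (hr : 1 ≤ m t₀ f₀)
    (C : Finset (V₁ ⊕ V₂))
    (ht₀ : Sum.inl t₀ ∉ C)
    (hsep : ∀ (v : V₁) (w : V₂), 0 < m v w → (v, w) ≠ (t₀, f₀) →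
      (Sum.inl v ∈ C ↔ Sum.inr w ∈ C)) :
    MultiEquitablyRealizes n (splitMult m t₀ f₀ C (m t₀ f₀))
      (splitTau τ C (m t₀ f₀)) (splitPhi φ C (m t₀ f₀)) := by
  rw [splitTau_eq_comp, splitPhi_eq_comp]
  exact hreal.pullback (splitProjL_surjective hr) (splitProjR_surjective hr)
    (IsCrossedOnlyAt.sum_fiber_splitMult hsep ht₀) (IsCrossedOnlyAt.exists_splitMult_pos hsep ht₀)

/-- Splitting a vertex preserves equitable realizations: if `τ, φ` equitably realize `n` on
the bipartite multigraph `m`, `r = m t₀ f₀ ≥ 1`, and `(C, Cᶜ)` is a partition of `V₁ ⊕ V₂`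
with `f₀ ∈ C`, `t₀ ∉ C`, such that every pair `(v, w) ≠ (t₀, f₀)` with `m v w > 0` lies on
one side of the partition, then the induced maps `τ', φ'` equitably realize `n` on the split
multigraph. -/
theorem splitMult_equitablyRealizes {V₁ V₂ T F : Type}
    [Fintype V₁] [Fintype V₂] [DecidableEq V₁] [DecidableEq V₂] [DecidableEq F]
    (n : T × F → ℕ) (m : V₁ → V₂ → ℕ) (τ : V₁ → T) (φ : V₂ → F)
    (hreal : MultiEquitablyRealizes n m τ φ)
    (t₀ : V₁) (f₀ : V₂) (hr : 1 ≤ m t₀ f₀)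
    (C : Finset (V₁ ⊕ V₂))
    (hf₀ : Sum.inr f₀ ∈ C) (ht₀ : Sum.inl t₀ ∉ C)
    (hsep : ∀ (v : V₁) (w : V₂), 0 < m v w → (v, w) ≠ (t₀, f₀) →
      (Sum.inl v ∈ C ↔ Sum.inr w ∈ C)) :
    MultiEquitablyRealizes n (splitMult m t₀ f₀ C (m t₀ f₀))
      (splitTau τ C (m t₀ f₀)) (splitPhi φ C (m t₀ f₀)) :=
  splitMult_equitablyRealizes_general n m τ φ hreal t₀ f₀ hr C ht₀ hsep
end

section
/- Let Λ be a finite simple bipartite graph with parts C and S (every edge of Λ joins a vertex of C to a vertex of S) which is acyclic (a forest). Let n ≥ 3 and suppose every vertex of C has exactly n neighbors. Then there exists a subset M ⊆ S such that every vertex of C has exactly one neighbor in M. -/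
open SimpleGraph in

lemma forest_seq_injective {V : Type*} {G : SimpleGraph V} (hG : G.IsAcyclic)
    (v : ℕ → V) (hadj : ∀ i, G.Adj (v i) (v (i + 1))) (hnb : ∀ i, v (i + 2) ≠ v i) :
    Function.Injective v := by
  classical
  have claim : ∀ n, ∃ w : G.Walk (v n) (v 0), w.IsPath ∧
      w.support = ((List.range (n + 1)).reverse.map v) ∧
      w.edges = ((List.range n).reverse.map (fun i => s(v (i + 1), v i))) := by
    intro n
    induction n with
    | zero => exact ⟨SimpleGraph.Walk.nil, by simp, by simp [List.range_succ], by simp⟩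
    | succ n ih =>
      obtain ⟨w, hp, hs, he⟩ := ih
      -- injectivity of v on 0..n
      have hnodup : ((List.range (n + 1)).map v).Nodup := by
        have := hp.support_nodup
        rw [hs, List.map_reverse, List.nodup_reverse] at this
        exact this
      have hinj : ∀ a ∈ List.range (n + 1), ∀ b ∈ List.range (n + 1), v a = v b → a = b :=
        fun a ha b hb h => List.inj_on_of_nodup_map hnodup ha hb h
      have hnotmem : v (n + 1) ∉ w.support := by
        intro hmem
        rw [hs, List.mem_map] at hmem
        obtain ⟨j, hj, hvj⟩ := hmem
        rw [List.mem_reverse, List.mem_range] at hj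
        have hjn : j ≤ n := Nat.lt_succ_iff.mp hj
        have hj1 : j ≠ n := by
          rintro rfl
          exact (hadj j).ne hvj
        have hj2 : j + 2 ≠ n + 1 := fun h =>
          hnb j (by rw [hvj]; exact congrArg v (by omega))
        have hjle : j + 2 ≤ n := by omega
        -- build a cycle
        have hmemw : v j ∈ w.support := by
          rw [hs, List.mem_map]
          exact ⟨j, by rw [List.mem_reverse, List.mem_range]; omega, rfl⟩
        set q := w.takeUntil (v j) hmemw with hq
        have hqp : q.IsPath := hp.takeUntil hmemw
        have hadj' : G.Adj (v j) (v n) := by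
          rw [hvj]; exact (hadj n).symm
        have hedge : s(v j, v n) ∉ q.edges := by
          intro hin
          have hin' := w.edges_takeUntil_subset hmemw hin
          rw [he, List.mem_map] at hin'
          obtain ⟨i, hi, hvi⟩ := hin'
          rw [List.mem_reverse, List.mem_range] at hi
          rw [Sym2.eq_iff] at hvi
          rcases hvi with ⟨h1, h2⟩ | ⟨h1, h2⟩
          · have : n = i := hinj n (by simp) i (by simp; omega) h2.symm
            omega
          · have hni : n = i + 1 := hinj n (by simp) (i + 1) (by simp; omega) h1.symm
            have : j = i := hinj j (by simp; omega) i (by simp; omega) h2.symm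
            omega
        have hcyc : (SimpleGraph.Walk.cons hadj' q).IsCycle := by
          rw [SimpleGraph.Walk.cons_isCycle_iff]
          exact ⟨hqp, hedge⟩
        exact hG _ hcyc
      refine ⟨SimpleGraph.Walk.cons (hadj n).symm w, ?_, ?_, ?_⟩
      · rw [SimpleGraph.Walk.cons_isPath_iff]
        exact ⟨hp, hnotmem⟩
      · rw [SimpleGraph.Walk.support_cons, hs]
        simp [List.range_succ]
      · rw [SimpleGraph.Walk.edges_cons, he]
        simp [List.range_succ]
  have key : ∀ a b, a < b → v a ≠ v b := by
    intro a b hlt hab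
    obtain ⟨w, hp, hs, -⟩ := claim b
    have hnodup : ((List.range (b + 1)).map v).Nodup := by
      have := hp.support_nodup
      rw [hs, List.map_reverse, List.nodup_reverse] at this
      exact this
    have := List.inj_on_of_nodup_map hnodup (by simp; omega : a ∈ List.range (b + 1))
      (by simp : b ∈ List.range (b + 1)) hab
    omega
  intro a b hab
  rcases lt_trichotomy a b with h | h | h
  · exact absurd hab (key a b h)
  · exact h
  · exact absurd hab.symm (key b a h)

open SimpleGraph in

lemma exists_good_vertex {C S : Type} [Fintype C] [Fintype S]
    (Λ : SimpleGraph (C ⊕ S)) (hforest : Λ.IsAcyclic)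
    (T : Finset C) (hT : T.Nonempty) :
    ∃ c0 ∈ T, ∀ s1 s2 : S,
      (Λ.Adj (Sum.inl c0) (Sum.inr s1) ∧ ∃ c' ∈ T, c' ≠ c0 ∧ Λ.Adj (Sum.inl c') (Sum.inr s1)) →
      (Λ.Adj (Sum.inl c0) (Sum.inr s2) ∧ ∃ c' ∈ T, c' ≠ c0 ∧ Λ.Adj (Sum.inl c') (Sum.inr s2)) →
      s1 = s2 := by
  classical
  by_contra hcon
  push_neg at hcon
  -- every c in T has two distinct shared neighbours
  set Sh : C → S → Prop := fun c s =>
    Λ.Adj (Sum.inl c) (Sum.inr s) ∧ ∃ c' ∈ T, c' ≠ c ∧ Λ.Adj (Sum.inl c') (Sum.inr s) with hSh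
  have H : ∀ c ∈ T, ∃ s1 s2 : S, Sh c s1 ∧ Sh c s2 ∧ s1 ≠ s2 := by
    intro c hc
    obtain ⟨s1, s2, h1, h2, h3⟩ := hcon c hc
    exact ⟨s1, s2, h1, h2, h3⟩
  -- the type of "current position" pairs
  set X := {p : C × S // p.1 ∈ T ∧ Sh p.1 p.2} with hX
  have step : ∀ x : X, ∃ y : X, y.1.1 ≠ x.1.1 ∧ Λ.Adj (Sum.inl y.1.1) (Sum.inr x.1.2) ∧
      y.1.2 ≠ x.1.2 := by
    rintro ⟨⟨c, s⟩, hcT, hadj, c', hc'T, hc'ne, hc'adj⟩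
    obtain ⟨s1, s2, hs1, hs2, hs12⟩ := H c' hc'T
    by_cases h : s1 = s
    · exact ⟨⟨(c', s2), hc'T, hs2⟩, hc'ne, hc'adj, by simp; rw [← h] at *; exact hs12.symm⟩
    · exact ⟨⟨(c', s1), hc'T, hs1⟩, hc'ne, hc'adj, h⟩
  choose g hg1 hg2 hg3 using step
  obtain ⟨c0, hc0⟩ := hT
  obtain ⟨s1, s2, hs1, -, -⟩ := H c0 hc0
  set x0 : X := ⟨(c0, s1), hc0, hs1⟩ with hx0
  set f : ℕ → X := fun k => g^[k] x0 with hf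
  have hfs : ∀ k, f (k + 1) = g (f k) := by
    intro k
    simp [hf, Function.iterate_succ_apply']
  set v : ℕ → C ⊕ S := fun k =>
    if k % 2 = 0 then Sum.inl (f (k / 2)).1.1 else Sum.inr (f (k / 2)).1.2 with hv
  have hveven : ∀ m, v (2 * m) = Sum.inl (f m).1.1 := by
    intro m; simp [hv, Nat.mul_div_cancel_left, Nat.mul_mod_right]
  have hvodd : ∀ m, v (2 * m + 1) = Sum.inr (f m).1.2 := by
    intro m
    have h1 : (2 * m + 1) % 2 = 1 := by omega
    have h2 : (2 * m + 1) / 2 = m := by omega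
    simp [hv, h1, h2]
  have hadj : ∀ i, Λ.Adj (v i) (v (i + 1)) := by
    intro i
    rcases Nat.even_or_odd i with ⟨m, hm⟩ | ⟨m, hm⟩
    · subst hm
      rw [show m + m = 2 * m by ring, hveven, show 2 * m + 1 = 2 * m + 1 from rfl, hvodd]
      exact (f m).2.2.1
    · subst hm
      rw [show 2 * m + 1 + 1 = 2 * (m + 1) by ring, hvodd, hveven, hfs]
      exact (hg2 (f m)).symm
  have hnb : ∀ i, v (i + 2) ≠ v i := by
    intro i
    rcases Nat.even_or_odd i with ⟨m, hm⟩ | ⟨m, hm⟩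
    · subst hm
      rw [show m + m + 2 = 2 * (m + 1) by ring, show m + m = 2 * m by ring, hveven, hveven, hfs]
      simp only [ne_eq, Sum.inl.injEq]
      exact hg1 (f m)
    · subst hm
      rw [show 2 * m + 1 + 2 = 2 * (m + 1) + 1 by ring, hvodd, hvodd, hfs]
      simp only [ne_eq, Sum.inr.injEq]
      exact hg3 (f m)
  exact not_injective_infinite_finite v (forest_seq_injective hforest v hadj hnb)

/-- Existence of a matching (Lemma 6.6): if `Λ` is a finite acyclic simple graph that is
bipartite with parts `C` and `S` (every edge joins a `C`-vertex to an `S`-vertex), `n ≥ 3`,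
and every vertex of `C` has exactly `n` neighbors, then there is a subset `M ⊆ S` such that
every vertex of `C` has exactly one neighbor in `M`. -/
theorem exists_matching {C S : Type} [Fintype C] [Fintype S]
    (Λ : SimpleGraph (C ⊕ S)) (hforest : Λ.IsAcyclic)
    (hbipC : ∀ c c' : C, ¬ Λ.Adj (Sum.inl c) (Sum.inl c'))
    (hbipS : ∀ s s' : S, ¬ Λ.Adj (Sum.inr s) (Sum.inr s'))
    (n : ℕ) (hn : 3 ≤ n)
    (hdeg : ∀ c : C, Nat.card {s : S // Λ.Adj (Sum.inl c) (Sum.inr s)} = n) :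
    ∃ M : Set S, ∀ c : C, ∃! s : S, s ∈ M ∧ Λ.Adj (Sum.inl c) (Sum.inr s) := by
  have exists_good_vertex := fun T hT => exists_good_vertex Λ hforest T hT
  classical
  have aux : ∀ (N : ℕ) (T : Finset C), T.card ≤ N →
      ∃ M : Set S, (∀ s ∈ M, ∃ c ∈ T, Λ.Adj (Sum.inl c) (Sum.inr s)) ∧
        ∀ c ∈ T, ∃! s : S, s ∈ M ∧ Λ.Adj (Sum.inl c) (Sum.inr s) := by
    intro N
    induction N with
    | zero =>
      intro T hT
      have : T = ∅ := Finset.card_eq_zero.mp (Nat.le_zero.mp hT)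
      subst this
      exact ⟨∅, by simp, by simp⟩
    | succ N ih =>
      intro T hT
      rcases T.eq_empty_or_nonempty with rfl | hne
      · exact ⟨∅, by simp, by simp⟩
      obtain ⟨c0, hc0T, hc0⟩ := exists_good_vertex T hne
      -- c0 has a private neighbour p
      have hpriv : ∃ p : S, Λ.Adj (Sum.inl c0) (Sum.inr p) ∧
          ¬ ∃ c' ∈ T, c' ≠ c0 ∧ Λ.Adj (Sum.inl c') (Sum.inr p) := by
        by_contra hcon
        push_neg at hcon
        have hsub : Subsingleton {s : S // Λ.Adj (Sum.inl c0) (Sum.inr s)} := by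
          constructor
          rintro ⟨a, ha⟩ ⟨b, hb⟩
          have := hc0 a b ⟨ha, hcon a ha⟩ ⟨hb, hcon b hb⟩
          simpa using this
        have := Finite.card_le_one_iff_subsingleton.mpr hsub
        rw [hdeg c0] at this
        omega
      obtain ⟨p, hpadj, hppriv⟩ := hpriv
      obtain ⟨M', hM'sub, hM'⟩ := ih (T.erase c0)
        (by have := Finset.card_erase_of_mem hc0T; omega)
      by_cases hA : ∃ s0 ∈ M', Λ.Adj (Sum.inl c0) (Sum.inr s0)
      · obtain ⟨s0, hs0M, hs0adj⟩ := hA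
        -- s0 is shared for c0
        have hs0sh : ∃ c' ∈ T, c' ≠ c0 ∧ Λ.Adj (Sum.inl c') (Sum.inr s0) := by
          obtain ⟨c', hc', hadj'⟩ := hM'sub s0 hs0M
          exact ⟨c', Finset.mem_of_mem_erase hc', Finset.ne_of_mem_erase hc', hadj'⟩
        refine ⟨M', ?_, ?_⟩
        · intro s hs
          obtain ⟨c', hc', hadj'⟩ := hM'sub s hs
          exact ⟨c', Finset.mem_of_mem_erase hc', hadj'⟩
        · intro c hcT
          by_cases hcc : c = c0
          · refine ⟨s0, ⟨hs0M, hcc ▸ hs0adj⟩, ?_⟩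
            rintro s ⟨hsM, hsadj⟩
            have hssh : ∃ c' ∈ T, c' ≠ c0 ∧ Λ.Adj (Sum.inl c') (Sum.inr s) := by
              obtain ⟨c', hc', hadj'⟩ := hM'sub s hsM
              exact ⟨c', Finset.mem_of_mem_erase hc', Finset.ne_of_mem_erase hc', hadj'⟩
            exact hc0 s s0 ⟨hcc ▸ hsadj, hssh⟩ ⟨hs0adj, hs0sh⟩
          · exact hM' c (Finset.mem_erase.mpr ⟨hcc, hcT⟩)
      · push_neg at hA
        refine ⟨insert p M', ?_, ?_⟩
        · intro s hs
          rcases Set.mem_insert_iff.mp hs with rfl | hs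
          · exact ⟨c0, hc0T, hpadj⟩
          · obtain ⟨c', hc', hadj'⟩ := hM'sub s hs
            exact ⟨c', Finset.mem_of_mem_erase hc', hadj'⟩
        · intro c hcT
          by_cases hcc : c = c0
          · subst hcc
            refine ⟨p, ⟨Set.mem_insert _ _, hpadj⟩, ?_⟩
            rintro s ⟨hsM, hsadj⟩
            rcases Set.mem_insert_iff.mp hsM with rfl | hs
            · rfl
            · exact absurd hsadj (hA s hs)
          · obtain ⟨s, ⟨hsM, hsadj⟩, huniq⟩ := hM' c (Finset.mem_erase.mpr ⟨hcc, hcT⟩)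
            refine ⟨s, ⟨Set.mem_insert_of_mem _ hsM, hsadj⟩, ?_⟩
            rintro s' ⟨hs'M, hs'adj⟩
            rcases Set.mem_insert_iff.mp hs'M with rfl | hs'
            · exact absurd ⟨c, hcT, hcc, hs'adj⟩ hppriv
            · exact huniq s' ⟨hs', hs'adj⟩
  obtain ⟨M, -, hM⟩ := aux (Fintype.card C) Finset.univ (le_of_eq (Finset.card_univ))
  exact ⟨M, fun c => hM c (Finset.mem_univ c)⟩
end
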